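/- Suppose the projection of E_c(x_sp,i) onto the (p_x, p_y)-plane is contained in the 2D ball B_r(p_i) centered at agent i's position whenever x_i ∈ E_c(x_sp,i), and the setpoint is updated only when x_i ∈ E_s(x_sp,i) via x'_sp,i = x_sp,i + (√c - √s)v (so that x_i ∈ E_c(x'_sp,i)). If the new ellipsoid E_c(x'_sp,i) intersects E_c(x_sp,j) for some agent j, then B_r(p_i) ∩ B_r(p_j) ≠ ∅ (i.e., j is within one-hop communication range of i). Here assume the projection of E_c(x_sp,j) is likewise contained in B_r(p_j). -/

import Mathlib

open Matrix

private lemma quad_sqrt_add_le {n : ℕ} (P : Matrix (Fin n) (Fin n) ℝ) (hP : P.PosDef)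
    (u w : Fin n → ℝ) :
    Real.sqrt ((u + w) ⬝ᵥ P.mulVec (u + w)) ≤
      Real.sqrt (u ⬝ᵥ P.mulVec u) + Real.sqrt (w ⬝ᵥ P.mulVec w) := by
  letI G : NormedAddCommGroup (Fin n → ℝ) := Matrix.toNormedAddCommGroup P hP
  have hnorm : ∀ x : Fin n → ℝ, @norm _ G.toNorm x = Real.sqrt (x ⬝ᵥ P.mulVec x) :=
    fun x => by
      change Real.sqrt (RCLike.re ((P *ᵥ x) ⬝ᵥ star x)) = _
      simp [dotProduct_comm]
  have h := @norm_add_le (Fin n → ℝ)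
    (@SeminormedAddCommGroup.toSeminormedAddGroup _
      (@NormedAddCommGroup.toSeminormedAddCommGroup _ G)) u w
  simpa [hnorm] using h


theorem one_hop_safety_violation (n : ℕ)
    (P : Matrix (Fin n) (Fin n) ℝ) (hP : P.PosDef)
    (s c : ℝ) (hs : 0 < s) (hsc : s < c)
    (r : ℝ) (hr : 0 < r)
    (pi_ pj : EuclideanSpace ℝ (Fin 2))
    (π : (Fin n → ℝ) → EuclideanSpace ℝ (Fin 2))
    (xi xspi v xspj : Fin n → ℝ)
    (hv : Real.sqrt (v ⬝ᵥ P.mulVec v) = 1)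
    -- agent i is inside the inner ellipsoid, so the setpoint update is performed
    (hxi : (xi - xspi) ⬝ᵥ P.mulVec (xi - xspi) ≤ s)
    -- Assumption 1 for agent i: whenever x_i lies in E_c(z), the projection of
    -- E_c(z) is contained in the communication ball of agent i
    (hproj_i : ∀ z : Fin n → ℝ, (xi - z) ⬝ᵥ P.mulVec (xi - z) ≤ c →
      π '' {x : Fin n → ℝ | (x - z) ⬝ᵥ P.mulVec (x - z) ≤ c} ⊆
        Metric.closedBall pi_ r)
    -- Assumption 1 for agent j
    (hproj_j : π '' {x : Fin n → ℝ | (x - xspj) ⬝ᵥ P.mulVec (x - xspj) ≤ c} ⊆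
      Metric.closedBall pj r)
    -- the updated ellipsoid intersects agent j's ellipsoid
    (hint : ({x : Fin n → ℝ |
        (x - (xspi + (Real.sqrt c - Real.sqrt s) • v)) ⬝ᵥ
          P.mulVec (x - (xspi + (Real.sqrt c - Real.sqrt s) • v)) ≤ c} ∩
      {x : Fin n → ℝ | (x - xspj) ⬝ᵥ P.mulVec (x - xspj) ≤ c}).Nonempty) :
    (Metric.closedBall pi_ r ∩ Metric.closedBall pj r).Nonempty := by
  have hc : (0:ℝ) < c := hs.trans hsc
  have hqnonneg : ∀ u : Fin n → ℝ, 0 ≤ u ⬝ᵥ P.mulVec u := by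
    intro u
    rcases eq_or_ne u 0 with rfl | h
    · simp
    · exact (hP.re_dotProduct_pos h).le
  have hnew : (xi - (xspi + (Real.sqrt c - Real.sqrt s) • v)) ⬝ᵥ
      P.mulVec (xi - (xspi + (Real.sqrt c - Real.sqrt s) • v)) ≤ c := by
    set a := Real.sqrt c - Real.sqrt s with ha
    have ha0 : 0 ≤ a := sub_nonneg.2 (Real.sqrt_le_sqrt hsc.le)
    set u := xi - (xspi + a • v) with hu
    have h1 : u = (xi - xspi) + (-a) • v := by
      rw [hu]; simp [neg_smul]; abel
    have hscale : ((-a) • v) ⬝ᵥ P.mulVec ((-a) • v) = a ^ 2 * (v ⬝ᵥ P.mulVec v) := by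
      rw [smul_dotProduct, mulVec_smul, dotProduct_smul]
      simp [smul_eq_mul]; ring
    have h2 : Real.sqrt (u ⬝ᵥ P.mulVec u) ≤ Real.sqrt c := by
      rw [h1]
      calc Real.sqrt (((xi - xspi) + (-a) • v) ⬝ᵥ P.mulVec ((xi - xspi) + (-a) • v))
          ≤ Real.sqrt ((xi - xspi) ⬝ᵥ P.mulVec (xi - xspi)) +
            Real.sqrt (((-a) • v) ⬝ᵥ P.mulVec ((-a) • v)) :=
            quad_sqrt_add_le P hP _ _
        _ ≤ Real.sqrt s + a := by
            refine add_le_add (Real.sqrt_le_sqrt hxi) (le_of_eq ?_)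
            rw [hscale, Real.sqrt_mul (sq_nonneg a), hv, mul_one,
              Real.sqrt_sq ha0]
        _ = Real.sqrt c := by rw [ha]; ring
    calc u ⬝ᵥ P.mulVec u = Real.sqrt (u ⬝ᵥ P.mulVec u) ^ 2 :=
          (Real.sq_sqrt (hqnonneg u)).symm
      _ ≤ Real.sqrt c ^ 2 := pow_le_pow_left₀ (Real.sqrt_nonneg _) h2 2
      _ = c := Real.sq_sqrt hc.le
  obtain ⟨y, hy1, hy2⟩ := hint
  exact ⟨π y, hproj_i _ hnew ⟨y, hy1, rfl⟩, hproj_j ⟨y, hy2, rfl⟩⟩
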